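/- arXiv:2506.17684 — 2 statements merged into one kernel-verified Lean document; each statement's English description precedes it below -/
import Mathlib

section
/- For a prime p and integers a, b with 0 ≤ a < p, 1 ≤ b < p and gcd(b,p)=1, the Fermat quotient satisfies q_p(ap+b) ≡ q_p(b) - a·b^{-1} (mod p), where q_p(n) = (n^{p-1}-1)/p mod p and b^{-1} is the inverse of b modulo p. -/
/-!
Fermat's little theorem makes `p · q_p(n) + 1 = n^(p-1)` an exact identity for `n` prime to `p`.
Expanding `(b + ap)^(p-1)` to first order modulo `p²` gives
`p · q_p(ap + b) ≡ p · q_p(b) + (p - 1) a p b^(p-2)  (mod p²)`;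
dividing by `p` and using `p - 1 ≡ -1` and `b^(p-2) ≡ b⁻¹ (mod p)` yields the claim.
-/

/-- Fermat quotient: `q_p(n) = (n^(p-1) - 1)/p` (exact integer division by
Fermat's little theorem when `gcd(n,p)=1`), considered modulo `p`. -/
def fermatQuotient (p : ℕ) (n : ℤ) : ℤ := (n ^ (p - 1) - 1) / p

theorem mul_fermatQuotient {p : ℕ} (hp : p.Prime) {n : ℤ} (hn : IsCoprime n p) :
    p * fermatQuotient p n = n ^ (p - 1) - 1 :=
  Int.mul_ediv_cancel' (Int.ModEq.pow_card_sub_one_eq_one hp hn).symm.dvd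

theorem fermatQuotient_mul_add_modEq {p : ℕ} (hp : p.Prime) (a : ℤ) {b : ℤ}
    (hb : IsCoprime b p) :
    fermatQuotient p (a * p + b) ≡ fermatQuotient p b - a * b ^ (p - 2) [ZMOD p] := by
  have hab : IsCoprime (a * p + b) p := by
    simpa [add_comm] using hb.add_mul_right_left a
  have hsq : (p : ℤ) ^ 2 ∣ (b + a * p) ^ (p - 1) - b ^ (p - 1 - 1) * (a * p) * (p - 1 : ℕ)
      - b ^ (p - 1) :=
    (pow_dvd_pow_of_dvd (dvd_mul_left _ a) 2).trans (sq_dvd_add_pow_sub_sub _ b _)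
  have hp1 : ((p - 1 : ℕ) : ℤ) = p - 1 := by push_cast [Nat.cast_sub hp.one_le]; ring
  have hdiv : (p : ℤ) ∣ fermatQuotient p (a * p + b) - fermatQuotient p b
      - b ^ (p - 2) * a * (p - 1) := by
    rw [← mul_dvd_mul_iff_left (Int.natCast_ne_zero.mpr hp.ne_zero), ← sq]
    refine hsq.trans (dvd_of_eq ?_)
    rw [add_comm b, hp1, Nat.sub_sub]
    linear_combination mul_fermatQuotient hp hb - mul_fermatQuotient hp hab
  refine (Int.modEq_iff_dvd.mpr ?_).symm
  exact (hdiv.add (dvd_mul_left (p : ℤ) (b ^ (p - 2) * a))).trans (dvd_of_eq (by ring))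

theorem pow_sub_two_modEq_of_mul_modEq_one {p : ℕ} (hp : p.Prime) {b c : ℤ} (hb : IsCoprime b p)
    (hc : b * c ≡ 1 [ZMOD p]) : b ^ (p - 2) ≡ c [ZMOD p] :=
  calc b ^ (p - 2) = 1 * b ^ (p - 2) := (one_mul _).symm
    _ ≡ b * c * b ^ (p - 2) [ZMOD p] := hc.symm.mul_right _
    _ = c * b ^ (p - 1) := by
      rw [show p - 1 = p - 2 + 1 by have := hp.two_le; omega, pow_succ]; ring
    _ ≡ c * 1 [ZMOD p] := (Int.ModEq.pow_card_sub_one_eq_one hp hb).mul_left _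
    _ = c := mul_one c

theorem fq_shift_general (p : ℕ) (hp : p.Prime) (a b c : ℤ)
    (hgcd : Int.gcd b p = 1) (hc : Int.ModEq p (b * c) 1) :
    Int.ModEq p (fermatQuotient p (a * p + b))
      (fermatQuotient p b - a * c) := by
  have hb : IsCoprime b p := Int.isCoprime_iff_gcd_eq_one.mpr hgcd
  exact (fermatQuotient_mul_add_modEq hp a hb).trans
    (.sub_left _ (.mul_left a (pow_sub_two_modEq_of_mul_modEq_one hp hb hc)))

theorem fq_shift (p : ℕ) (hp : p.Prime) (a b c : ℤ)
    (ha0 : 0 ≤ a) (hap : a < p) (hb1 : 1 ≤ b) (hbp : b < p)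
    (hgcd : Int.gcd b p = 1) (hc : Int.ModEq p (b * c) 1) :
    Int.ModEq p (fermatQuotient p (a * p + b))
      (fermatQuotient p b - a * c) :=
  fq_shift_general p hp a b c hgcd hc
end

section
/- For a prime p ≥ 3 and integers a, b with 0 ≤ a ≤ p-1, 1 ≤ b ≤ p-1, gcd(b,p)=1, one has q_p(ap+b) ≡ q_p((p-1-a)p + (p-b)) (mod p), i.e. the entry A_{a,b} of the Fermat quotient matrix equals A_{p-1-a, p-b}. -/
/-! Write `n = ap + b`. Then `(p - 1 - a)p + (p - b) = p² - n ≡ -n (mod p²)`, and since `p - 1` is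
even, `(p² - n)^(p-1) ≡ n^(p-1) (mod p²)`. Two integers that are `≡ 1 (mod p)` and congruent
modulo `p²` have quotients `(· - 1)/p` congruent modulo `p`. -/

theorem Int.ediv_modEq_ediv_of_modEq_mul {p x y : ℤ} (hp : p ≠ 0) (hx : p ∣ x)
    (h : x ≡ y [ZMOD p * p]) : x / p ≡ y / p [ZMOD p] := by
  have hy : p ∣ y := (h.of_mul_right p).dvd_iff.mp hx
  obtain ⟨k, rfl⟩ := hx
  obtain ⟨l, rfl⟩ := hy
  rw [Int.mul_ediv_cancel_left _ hp, Int.mul_ediv_cancel_left _ hp]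
  exact h.mul_left_cancel' hp

theorem fermatQuotient_modEq_of_pow_modEq {p : ℕ} (hp : p.Prime) {m n : ℤ}
    (hm : IsCoprime m p) (h : m ^ (p - 1) ≡ n ^ (p - 1) [ZMOD p * p]) :
    fermatQuotient p m ≡ fermatQuotient p n [ZMOD p] :=
  Int.ediv_modEq_ediv_of_modEq_mul (by exact_mod_cast hp.ne_zero)
    (Int.ModEq.pow_card_sub_one_eq_one hp hm).symm.dvd (h.sub_right 1)

theorem fermatQuotient_modEq_of_modEq_neg {p : ℕ} (hp : p.Prime) (hp2 : p ≠ 2) {m n : ℤ}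
    (hm : IsCoprime m p) (h : n ≡ -m [ZMOD p * p]) :
    fermatQuotient p n ≡ fermatQuotient p m [ZMOD p] := by
  have heven : Even (p - 1) := Nat.Odd.sub_odd (hp.odd_of_ne_two hp2) odd_one
  refine (fermatQuotient_modEq_of_pow_modEq hp hm ?_).symm
  simpa only [heven.neg_pow] using (h.pow (p - 1)).symm

theorem fq_symmetry_general (p : ℕ) (hp : p.Prime) (hp3 : 3 ≤ p) (a b : ℤ)
    (hgcd : Int.gcd b p = 1) :
    Int.ModEq p (fermatQuotient p (a * p + b))
      (fermatQuotient p (((p : ℤ) - 1 - a) * p + ((p : ℤ) - b))) := by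
  have hcop : IsCoprime (a * p + b) p := by
    rw [add_comm, mul_comm]
    exact (Int.isCoprime_iff_gcd_eq_one.mpr hgcd).add_mul_left_left a
  have hneg : ((p : ℤ) - 1 - a) * p + ((p : ℤ) - b) ≡ -(a * p + b) [ZMOD p * p] :=
    Int.modEq_iff_dvd.mpr ⟨-1, by ring⟩
  exact (fermatQuotient_modEq_of_modEq_neg hp (by omega) hcop hneg).symm

theorem fq_symmetry (p : ℕ) (hp : p.Prime) (hp3 : 3 ≤ p) (a b : ℤ)
    (ha0 : 0 ≤ a) (hap : a ≤ (p : ℤ) - 1) (hb1 : 1 ≤ b) (hbp : b ≤ (p : ℤ) - 1)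
    (hgcd : Int.gcd b p = 1) :
    Int.ModEq p (fermatQuotient p (a * p + b))
      (fermatQuotient p (((p : ℤ) - 1 - a) * p + ((p : ℤ) - b))) :=
  fq_symmetry_general p hp hp3 a b hgcd
end
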